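/- Let τ : {a,b}* → {a,b}* be the function with τ(1) = 1 (the empty word), τ(w) = (ab)^{|w|} for every nonempty word w beginning with the letter a, and τ(w) = (ba)^{|w|} for every nonempty word w beginning with the letter b. Then for every language L ⊆ {a,b}* recognized by a finite abelian group, the preimage τ⁻¹(L) is recognized by a finite abelian group. -/
import Mathlib


/-- The two-letter alphabet `{a, b}`. -/
inductive AB : Type
  | a : AB
  | b : AB
deriving DecidableEq

/-- `wpow x k` is the `k`-fold concatenation `xᵏ` of the word `x`. -/
def wpow {A : Type*} (x : List A) : ℕ → List A
  | 0 => []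
  | n + 1 => x ++ wpow x n

/-- `τ(1) = 1`, `τ(w) = (ab)^{|w|}` if `w` begins with `a`, and
`τ(w) = (ba)^{|w|}` if `w` begins with `b`. -/
def tau : List AB → List AB
  | [] => []
  | AB.a :: rest => wpow [AB.a, AB.b] (rest.length + 1)
  | AB.b :: rest => wpow [AB.b, AB.a] (rest.length + 1)

/-- `L` is recognized by a finite abelian group. -/
def RecogByFinAbGroup {A : Type} (L : Set (List A)) : Prop :=
  ∃ (M : Type) (_ : Fintype M) (_ : CommGroup M)
    (φ : FreeMonoid A →* M) (S : Set M),
    L = {w : List A | φ (FreeMonoid.ofList w) ∈ S}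

lemma phi_wpow {M : Type} [Monoid M] (φ : FreeMonoid AB →* M) (x : List AB) (n : ℕ) :
    φ (FreeMonoid.ofList (wpow x n)) = (φ (FreeMonoid.ofList x)) ^ n := by
  induction n with
  | zero => simp [wpow]
  | succ n ih =>
    have : FreeMonoid.ofList (x ++ wpow x n) =
        FreeMonoid.ofList x * FreeMonoid.ofList (wpow x n) := rfl
    rw [wpow, this, map_mul, ih, pow_succ']

lemma lift_const_length {M : Type} [Monoid M] (g : M) (w : List AB) :
    (FreeMonoid.lift (fun _ : AB => g)) (FreeMonoid.ofList w) = g ^ w.length := by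
  induction w with
  | nil => simp
  | cons c t ih =>
    have : FreeMonoid.ofList (c :: t) =
        FreeMonoid.of c * FreeMonoid.ofList t := rfl
    rw [this, map_mul, ih, FreeMonoid.lift_eval_of, List.length_cons, pow_succ']

/-- `τ` is Ab-continuous: preimages of languages recognized by finite
abelian groups are recognized by finite abelian groups. -/
theorem tau_ab_continuous (L : Set (List AB)) (hL : RecogByFinAbGroup L) :
    RecogByFinAbGroup (tau ⁻¹' L) := by
  obtain ⟨M, fM, cG, φ, S, hS⟩ := hL
  set g : M := φ (FreeMonoid.of AB.a) * φ (FreeMonoid.of AB.b) with hg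
  refine ⟨M, fM, cG, FreeMonoid.lift (fun _ : AB => g), S, ?_⟩
  ext w
  simp only [Set.mem_preimage, hS, Set.mem_setOf_eq, lift_const_length]
  cases w with
  | nil =>
    show φ (FreeMonoid.ofList (tau [])) ∈ S ↔ g ^ (0:ℕ) ∈ S
    rw [show (FreeMonoid.ofList (tau [])) = 1 from rfl, map_one, pow_zero]
  | cons c t =>
    cases c with
    | a =>
      have : φ (FreeMonoid.ofList (tau (AB.a :: t))) = g ^ (t.length + 1) := by
        rw [tau, phi_wpow]
        congr 1
        show φ (FreeMonoid.of AB.a * FreeMonoid.of AB.b) = g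
        rw [map_mul]
      rw [this, List.length_cons]
    | b =>
      have : φ (FreeMonoid.ofList (tau (AB.b :: t))) = g ^ (t.length + 1) := by
        rw [tau, phi_wpow]
        congr 1
        show φ (FreeMonoid.of AB.b * FreeMonoid.of AB.a) = g
        rw [map_mul, mul_comm]
      rw [this, List.length_cons]
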